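/- For n ≥ 1 and any proper chain c over [n], one direction of De Morgan fails: there exist atomic formulas p, q, a valuation, and a world i such that ¬_c p ∨ₙ ¬_c q is true in world i but ¬_c (p ∧ₙ q) is false in world i. -/

import Mathlib

inductive Formula (n : ℕ) : Type
  | atom : ℕ → Formula n
  | bot : Finset (Fin n) → Formula n
  | neg : Finset (Fin n) → Formula n → Formula n
  | imp : Formula n → Formula n → Formula n

def Formula.eval {n : ℕ} (v : ℕ → Fin n → Bool) (i : Fin n) : Formula n → Bool
  | .atom p => v p i
  | .bot c => if i ∈ c then false else true
  | .neg c φ => if i ∈ c then !(φ.eval v i) else φ.eval v i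
  | .imp φ ψ => !(φ.eval v i) || ψ.eval v i

def Formula.and {n : ℕ} (φ ψ : Formula n) : Formula n :=
  .neg Finset.univ (.imp φ (.neg Finset.univ ψ))

def Formula.or {n : ℕ} (φ ψ : Formula n) : Formula n :=
  .imp (.neg Finset.univ φ) ψ

def Formula.iff {n : ℕ} (φ ψ : Formula n) : Formula n :=
  Formula.and (.imp φ ψ) (.imp ψ φ)

def Tautology {n : ℕ} (φ : Formula n) : Prop :=
  ∀ (v : ℕ → Fin n → Bool) (i : Fin n), φ.eval v i = true

namespace Formula

variable {n : ℕ} (v : ℕ → Fin n → Bool) (i : Fin n)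

@[simp]
theorem eval_and (φ ψ : Formula n) : (φ.and ψ).eval v i = (φ.eval v i && ψ.eval v i) := by
  simp only [Formula.and, eval, Finset.mem_univ, if_true]
  cases φ.eval v i <;> cases ψ.eval v i <;> rfl

@[simp]
theorem eval_or (φ ψ : Formula n) : (φ.or ψ).eval v i = (φ.eval v i || ψ.eval v i) := by
  simp only [Formula.or, eval, Finset.mem_univ, if_true]
  cases φ.eval v i <;> rfl

theorem eval_neg_of_notMem {c : Finset (Fin n)} (hi : i ∉ c) (φ : Formula n) :
    (neg c φ).eval v i = φ.eval v i := by
  simp [eval, hi]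

end Formula

/- Outside `c` the negation `¬_c` is the identity, so in such a world the scheme reads
`p ∨ q → p ∧ q`, refuted by `p` true and `q` false. -/
theorem deMorgan_fails_general (n : ℕ) (c : Finset (Fin n))
    (hc : c ≠ Finset.univ) :
    ∃ (p q : ℕ) (v : ℕ → Fin n → Bool) (i : Fin n),
      (Formula.or (.neg c (.atom p)) (.neg c (.atom q))).eval v i = true ∧
      (Formula.neg c (Formula.and (.atom p) (.atom q))).eval v i = false := by
  obtain ⟨i, hi⟩ : ∃ i, i ∉ c := by simpa [Finset.eq_univ_iff_forall] using hc
  refine ⟨0, 1, fun k _ => k == 0, i, ?_, ?_⟩ <;>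
    simp only [Formula.eval_or, Formula.eval_and, Formula.eval_neg_of_notMem _ _ hi] <;> rfl

theorem deMorgan_fails (n : ℕ) (hn : 1 ≤ n) (c : Finset (Fin n))
    (hc : c ≠ Finset.univ) :
    ∃ (p q : ℕ) (v : ℕ → Fin n → Bool) (i : Fin n),
      (Formula.or (.neg c (.atom p)) (.neg c (.atom q))).eval v i = true ∧
      (Formula.neg c (Formula.and (.atom p) (.atom q))).eval v i = false :=
  deMorgan_fails_general n c hc
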